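/- Let (Ω, 𝒜, μ) be a probability space, let M, P be natural numbers, let ℓ_MoE, ℓ_static, R : Ω → ℝ be integrable, let W : Fin M → Fin P → Ω → ℝ and D : Fin M → Fin P → Ω → ℝ be families of integrable functions with each product (W m i)·(D m i) integrable, let w̄ : Fin M → ℝ, and let C ≥ 0. Suppose (i) the pointwise loss decomposition ℓ_MoE(ω) − ℓ_static(ω) = − Σ_{m,i} (W m i (ω) − w̄ m)·(D m i (ω)) + R(ω) holds for all ω, (ii) ∫ W m i dμ = w̄ m for all m, i, and (iii) |R(ω)| ≤ C for all ω. Then ∫ ℓ_MoE dμ − ∫ ℓ_static dμ ≤ − Γ + C, where Γ := Σ_{m ∈ Fin M} Σ_{i ∈ Fin P} Cov_μ(W m i, D m i). -/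
import Mathlib


open MeasureTheory

/-- Covariance of two real-valued functions with respect to a measure:
`Cov_μ(W, D) := ∫ W·D dμ − (∫ W dμ)·(∫ D dμ)`. -/
noncomputable def cov {Ω : Type*} [MeasurableSpace Ω] (μ : Measure Ω)
    (W D : Ω → ℝ) : ℝ :=
  (∫ ω, W ω * D ω ∂μ) - (∫ ω, W ω ∂μ) * (∫ ω, D ω ∂μ)

/-- With a uniformly bounded remainder, the expected loss difference of the
dynamic MoE fusion model over the static baseline is at most `−Γ + C`, where
`Γ` is the total weight–contribution covariance. -/
theorem stmt6 {Ω : Type*} [MeasurableSpace Ω] (μ : Measure Ω)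
    [IsProbabilityMeasure μ] (M P : ℕ)
    (ℓMoE ℓstatic R : Ω → ℝ)
    (hMoE : Integrable ℓMoE μ) (hstatic : Integrable ℓstatic μ)
    (hR : Integrable R μ)
    (W D : Fin M → Fin P → Ω → ℝ) (wbar : Fin M → ℝ)
    (hW : ∀ m i, Integrable (W m i) μ) (hD : ∀ m i, Integrable (D m i) μ)
    (hWD : ∀ m i, Integrable (fun ω => W m i ω * D m i ω) μ)
    (C : ℝ) (hC : 0 ≤ C)
    (hdecomp : ∀ ω, ℓMoE ω - ℓstatic ω =
      -(∑ m : Fin M, ∑ i : Fin P, (W m i ω - wbar m) * D m i ω) + R ω)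
    (hunbiased : ∀ m i, (∫ ω, W m i ω ∂μ) = wbar m)
    (hRbound : ∀ ω, |R ω| ≤ C) :
    (∫ ω, ℓMoE ω ∂μ) - (∫ ω, ℓstatic ω ∂μ) ≤
      -(∑ m : Fin M, ∑ i : Fin P, cov μ (W m i) (D m i)) + C := by
  have hterm : ∀ (m : Fin M) (i : Fin P),
      Integrable (fun ω => (W m i ω - wbar m) * D m i ω) μ := by
    intro m i
    have : (fun ω => (W m i ω - wbar m) * D m i ω)
        = fun ω => W m i ω * D m i ω - wbar m * D m i ω := by
      funext ω; ring
    rw [this]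
    exact (hWD m i).sub ((hD m i).const_mul _)
  have hsum : Integrable (fun ω => ∑ m : Fin M, ∑ i : Fin P,
      (W m i ω - wbar m) * D m i ω) μ :=
    integrable_finset_sum _ fun m _ => integrable_finset_sum _ fun i _ => hterm m i
  have hint : ∀ m i, (∫ ω, (W m i ω - wbar m) * D m i ω ∂μ) = cov μ (W m i) (D m i) := by
    intro m i
    have : (fun ω => (W m i ω - wbar m) * D m i ω)
        = fun ω => W m i ω * D m i ω - wbar m * D m i ω := by
      funext ω; ring
    rw [this, integral_sub (hWD m i) ((hD m i).const_mul _), integral_const_mul,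
      cov, ← hunbiased m i]
  have key : (∫ ω, ℓMoE ω ∂μ) - (∫ ω, ℓstatic ω ∂μ)
      = -(∑ m : Fin M, ∑ i : Fin P, cov μ (W m i) (D m i)) + ∫ ω, R ω ∂μ := by
    rw [← integral_sub hMoE hstatic]
    have : (fun ω => ℓMoE ω - ℓstatic ω)
        = fun ω => R ω - (∑ m : Fin M, ∑ i : Fin P, (W m i ω - wbar m) * D m i ω) := by
      funext ω; rw [hdecomp ω]; ring
    rw [this, integral_sub hR hsum,
      integral_finset_sum _ (fun m _ => integrable_finset_sum _ fun i _ => hterm m i)]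
    rw [add_comm, sub_eq_add_neg]
    congr 2
    exact Finset.sum_congr rfl fun m _ => by
      rw [integral_finset_sum _ fun i _ => hterm m i]
      exact Finset.sum_congr rfl fun i _ => hint m i
  rw [key]
  have : (∫ ω, R ω ∂μ) ≤ C := by
    calc (∫ ω, R ω ∂μ) ≤ |∫ ω, R ω ∂μ| := le_abs_self _
    _ ≤ ∫ ω, |R ω| ∂μ := (by simpa using norm_integral_le_integral_norm (μ := μ) R)
    _ ≤ ∫ _ω, C ∂μ := integral_mono hR.abs (integrable_const C) hRbound
    _ = C := by simp
  linarith
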